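/- arXiv:1809.10510 — 2 statements merged into one kernel-verified Lean document; each statement's English description precedes it below -/
import Mathlib

section
/- Let Ω ⊂ ℝⁿ⁺¹ be open, let (x₀,t₀) ∈ ∂ₛΩ, and let ε > 0 satisfy Qₑ⁻(x₀,t₀) ⊂ Ω and Qₑ⁺(x₀,t₀) ∩ Ω = ∅. Then every point of ∂Ω ∩ Qₑ(x₀,t₀) lies on the time slice {(x,t) : t = t₀} and belongs to ∂ₛΩ. In particular, the singular boundary ∂ₛΩ is relatively open in ∂Ω. -/
open MeasureTheory Set Filter Topology

noncomputable section

/-- Points of space-time `ℝⁿ × ℝ`. -/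
abbrev Pt (n : ℕ) : Type := EuclideanSpace ℝ (Fin n) × ℝ

/-- The open parabolic cube `Q_r(c)`. -/
def pcube (n : ℕ) (c : Pt n) (r : ℝ) : Set (Pt n) :=
  {p | (∀ i, |p.1 i - c.1 i| < r) ∧ c.2 - r ^ 2 < p.2 ∧ p.2 < c.2 + r ^ 2}

/-- The time-backward half cube `Q_r⁻(c)`. -/
def pcubeMinus (n : ℕ) (c : Pt n) (r : ℝ) : Set (Pt n) :=
  {p | (∀ i, |p.1 i - c.1 i| < r) ∧ c.2 - r ^ 2 < p.2 ∧ p.2 < c.2}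

/-- The time-forward half cube `Q_r⁺(c)`. -/
def pcubePlus (n : ℕ) (c : Pt n) (r : ℝ) : Set (Pt n) :=
  {p | (∀ i, |p.1 i - c.1 i| < r) ∧ c.2 < p.2 ∧ p.2 < c.2 + r ^ 2}

/-- The parabolic norm `‖(X,t)‖ = |X| + |t|^{1/2}`. -/
def pnorm (n : ℕ) (p : Pt n) : ℝ := ‖p.1‖ + Real.sqrt |p.2|

/-- The parabolic distance. -/
def pdist (n : ℕ) (p q : Pt n) : ℝ := pnorm n (p.1 - q.1, p.2 - q.2)

/-- The parabolic diameter of a set (in `ℝ≥0∞`). -/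
def pdiam (n : ℕ) (A : Set (Pt n)) : ENNReal :=
  ⨆ p ∈ A, ⨆ q ∈ A, ENNReal.ofReal (pdist n p q)

/-- The parabolic distance from a point to a set. -/
def pdistTo (n : ℕ) (p : Pt n) (A : Set (Pt n)) : ℝ := sInf ((pdist n p) '' A)

/-- The parabolic boundary `𝒫Ω`. -/
def parabolicBdry (n : ℕ) (Ω : Set (Pt n)) : Set (Pt n) :=
  {p | p ∈ frontier Ω ∧ ∀ r > 0, (pcubeMinus n p r ∩ Ωᶜ).Nonempty}

/-- The bottom boundary `ℬΩ`. -/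
def bottomBdry (n : ℕ) (Ω : Set (Pt n)) : Set (Pt n) :=
  {p | p ∈ parabolicBdry n Ω ∧ ∃ ε > 0, pcubePlus n p ε ⊆ Ω}

/-- The abnormal boundary `∂ₐΩ`. -/
def abnormalBdry (n : ℕ) (Ω : Set (Pt n)) : Set (Pt n) :=
  {p | p ∈ frontier Ω ∧ ∃ ε > 0, pcubeMinus n p ε ⊆ Ω}

/-- The singular boundary `∂ₛΩ`. -/
def singBdry (n : ℕ) (Ω : Set (Pt n)) : Set (Pt n) :=
  {p | p ∈ abnormalBdry n Ω ∧ ∃ ε > 0, pcubePlus n p ε ∩ Ω = ∅}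

/-- The essential boundary `∂ₑΩ = ∂Ω ∖ ∂ₛΩ`. -/
def essBdry (n : ℕ) (Ω : Set (Pt n)) : Set (Pt n) := frontier Ω \ singBdry n Ω

/-- `T_min(Ω)`, as an extended real number. -/
def parTmin (n : ℕ) (Ω : Set (Pt n)) : EReal := ⨅ p ∈ Ω, (p.2 : EReal)

/-- `T_max(Ω)`, as an extended real number. -/
def parTmax (n : ℕ) (Ω : Set (Pt n)) : EReal := ⨆ p ∈ Ω, (p.2 : EReal)

/-- The quasi-lateral boundary `Σ`:  `∂Ω` with the time slice of `ℬΩ` at `t = T_min(Ω)`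
removed (when `T_min(Ω) > -∞`), and the time slice of `∂ₛΩ` at `t = T_max(Ω)` removed
(when `T_max(Ω) < ∞`).  Since no real time coordinate can equal `±∞`, the `EReal`
formulation below encodes exactly this. -/
def quasiLateral (n : ℕ) (Ω : Set (Pt n)) : Set (Pt n) :=
  frontier Ω \
    ({p | p ∈ bottomBdry n Ω ∧ (p.2 : EReal) = parTmin n Ω} ∪
     {p | p ∈ singBdry n Ω ∧ (p.2 : EReal) = parTmax n Ω})

/-- The free-space heat kernel. -/
def heatKernel (n : ℕ) (X : EuclideanSpace ℝ (Fin n)) (t : ℝ)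
    (y : EuclideanSpace ℝ (Fin n)) (s : ℝ) : ℝ :=
  if s < t then
    (4 * Real.pi * (t - s)) ^ (-(n : ℝ) / 2) * Real.exp (-‖X - y‖ ^ 2 / (4 * (t - s)))
  else 0

/-- Time derivative `∂ₜ u`. -/
def timeDeriv (n : ℕ) (u : Pt n → ℝ) (p : Pt n) : ℝ := deriv (fun τ => u (p.1, τ)) p.2

/-- Spatial Laplacian `Δ_X u`. -/
def spaceLaplacian (n : ℕ) (u : Pt n → ℝ) (p : Pt n) : ℝ :=
  ∑ i : Fin n,
    iteratedDeriv 2 (fun h : ℝ => u (p.1 + h • EuclideanSpace.single i (1 : ℝ), p.2)) 0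

/-- A classical supersolution of the heat equation on `U`: continuous on `U`,
twice continuously differentiable in `X` and once in `t`, with `∂ₜ u - Δ_X u ≥ 0`. -/
structure IsSupersolutionOn (n : ℕ) (u : Pt n → ℝ) (U : Set (Pt n)) : Prop where
  cont : ContinuousOn u U
  smoothX : ∀ p ∈ U, ContDiffAt ℝ 2 (fun X => u (X, p.2)) p.1
  smoothT : ∀ p ∈ U, ContDiffAt ℝ 1 (fun τ => u (p.1, τ)) p.2
  ineq : ∀ p ∈ U, spaceLaplacian n u p ≤ timeDeriv n u p

/-- A classical subsolution of the heat equation on `U`. -/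
structure IsSubsolutionOn (n : ℕ) (u : Pt n → ℝ) (U : Set (Pt n)) : Prop where
  cont : ContinuousOn u U
  smoothX : ∀ p ∈ U, ContDiffAt ℝ 2 (fun X => u (X, p.2)) p.1
  smoothT : ∀ p ∈ U, ContDiffAt ℝ 1 (fun τ => u (p.1, τ)) p.2
  ineq : ∀ p ∈ U, timeDeriv n u p ≤ spaceLaplacian n u p

/-- A caloric function (classical solution of the heat equation) on `U`. -/
structure IsCaloricOn (n : ℕ) (u : Pt n → ℝ) (U : Set (Pt n)) : Prop where
  cont : ContinuousOn u U
  smoothX : ∀ p ∈ U, ContDiffAt ℝ 2 (fun X => u (X, p.2)) p.1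
  smoothT : ∀ p ∈ U, ContDiffAt ℝ 1 (fun τ => u (p.1, τ)) p.2
  eq : ∀ p ∈ U, timeDeriv n u p = spaceLaplacian n u p
lemma continuous_coord (n : ℕ) (i : Fin n) : Continuous (fun p : Pt n => p.1 i) := by
  have : Continuous (fun p : Pt n => (EuclideanSpace.proj i : EuclideanSpace ℝ (Fin n) →L[ℝ] ℝ) p.1) :=
    (EuclideanSpace.proj i).continuous.comp continuous_fst
  exact this

lemma isOpen_pcube (n : ℕ) (c : Pt n) (r : ℝ) : IsOpen (pcube n c r) := by
  have : pcube n c r =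
      (⋂ i, {p : Pt n | |p.1 i - c.1 i| < r}) ∩
        {p : Pt n | c.2 - r ^ 2 < p.2 ∧ p.2 < c.2 + r ^ 2} := by
    ext p; simp [pcube, Set.mem_iInter]
  rw [this]
  exact IsOpen.inter
    (isOpen_iInter_of_finite fun i =>
      isOpen_lt (continuous_abs.comp ((continuous_coord n i).sub continuous_const))
        continuous_const)
    ((isOpen_lt continuous_const continuous_snd).and
      (isOpen_lt continuous_snd continuous_const))

lemma isOpen_pcubePlus (n : ℕ) (c : Pt n) (r : ℝ) : IsOpen (pcubePlus n c r) := by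
  have : pcubePlus n c r =
      (⋂ i, {p : Pt n | |p.1 i - c.1 i| < r}) ∩
        {p : Pt n | c.2 < p.2 ∧ p.2 < c.2 + r ^ 2} := by
    ext p; simp [pcubePlus, Set.mem_iInter]
  rw [this]
  exact IsOpen.inter
    (isOpen_iInter_of_finite fun i =>
      isOpen_lt (continuous_abs.comp ((continuous_coord n i).sub continuous_const))
        continuous_const)
    ((isOpen_lt continuous_const continuous_snd).and
      (isOpen_lt continuous_snd continuous_const))

lemma pcubeMinus_mono (n : ℕ) (c : Pt n) {r s : ℝ} (hr : 0 ≤ r) (h : r ≤ s) :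
    pcubeMinus n c r ⊆ pcubeMinus n c s := by
  intro q hq
  obtain ⟨h1, h2, h3⟩ := hq
  have hsq : r ^ 2 ≤ s ^ 2 := by nlinarith
  exact ⟨fun i => lt_of_lt_of_le (h1 i) h, by linarith, h3⟩

lemma pcubePlus_mono (n : ℕ) (c : Pt n) {r s : ℝ} (hr : 0 ≤ r) (h : r ≤ s) :
    pcubePlus n c r ⊆ pcubePlus n c s := by
  intro q hq
  obtain ⟨h1, h2, h3⟩ := hq
  have hsq : r ^ 2 ≤ s ^ 2 := by nlinarith
  exact ⟨fun i => lt_of_lt_of_le (h1 i) h, h2, by linarith⟩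

lemma key_lemma (n : ℕ) (Ω : Set (Pt n)) (hΩ : IsOpen Ω)
    (x₀ : Pt n) (ε : ℝ) (hε : 0 < ε)
    (hminus : pcubeMinus n x₀ ε ⊆ Ω) (hplus : pcubePlus n x₀ ε ∩ Ω = ∅) :
    ∀ p ∈ frontier Ω ∩ pcube n x₀ ε, p.2 = x₀.2 ∧ p ∈ singBdry n Ω := by
  rintro p ⟨hpf, hsp, ht1, ht2⟩
  have hpnot : p ∉ Ω := by
    have := hpf.2
    rwa [hΩ.interior_eq] at this
  have hclo : p ∈ closure Ω := hpf.1
  have heq : p.2 = x₀.2 := by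
    rcases lt_trichotomy p.2 x₀.2 with h | h | h
    · exact absurd (hminus ⟨hsp, ht1, h⟩) hpnot
    · exact h
    · have hsub : closure Ω ⊆ (pcubePlus n x₀ ε)ᶜ :=
        closure_minimal
          (fun q hq hq' => Set.eq_empty_iff_forall_notMem.1 hplus q ⟨hq', hq⟩)
          (isOpen_pcubePlus n x₀ ε).isClosed_compl
      exact absurd ⟨hsp, h, ht2⟩ (hsub hclo)
  -- construct a small δ
  classical
  set S : Finset ℝ :=
    insert ε (Finset.image (fun i => ε - |p.1 i - x₀.1 i|) Finset.univ) with hSdef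
  have hS : S.Nonempty := ⟨ε, Finset.mem_insert_self _ _⟩
  set δ := S.min' hS with hδdef
  have hδpos : 0 < δ := by
    rw [hδdef, Finset.lt_min'_iff]
    intro y hy
    rcases Finset.mem_insert.1 hy with rfl | hy
    · exact hε
    · obtain ⟨i, _, rfl⟩ := Finset.mem_image.1 hy
      have := hsp i; linarith
  have hδε : δ ≤ ε := Finset.min'_le _ _ (Finset.mem_insert_self _ _)
  have hδi : ∀ i, δ ≤ ε - |p.1 i - x₀.1 i| := fun i =>
    Finset.min'_le _ _
      (Finset.mem_insert_of_mem (Finset.mem_image_of_mem _ (Finset.mem_univ i)))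
  have hδsq : δ ^ 2 ≤ ε ^ 2 := by nlinarith
  have hspat : ∀ q : Pt n, (∀ i, |q.1 i - p.1 i| < δ) → ∀ i, |q.1 i - x₀.1 i| < ε := by
    intro q hq i
    have h1 := abs_sub_le (q.1 i) (p.1 i) (x₀.1 i)
    have h2 := hq i
    have h3 := hδi i
    linarith
  refine ⟨heq, ⟨hpf, δ, hδpos, ?_⟩, δ, hδpos, ?_⟩
  · rintro q ⟨hq1, hq2, hq3⟩
    exact hminus ⟨hspat q hq1, by linarith, by linarith⟩
  · have hsub : pcubePlus n p δ ⊆ pcubePlus n x₀ ε := by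
      rintro q ⟨hq1, hq2, hq3⟩
      exact ⟨hspat q hq1, by linarith, by linarith⟩
    exact Set.eq_empty_of_subset_empty
      (hplus ▸ Set.inter_subset_inter_left Ω hsub)

/-- near a singular boundary point, all boundary points lie on the same time
slice and are singular; in particular, the singular boundary is relatively open in `∂Ω`. -/
theorem statement_3 (n : ℕ) (Ω : Set (Pt n)) (hΩ : IsOpen Ω)
    (x₀ : Pt n) (hx₀ : x₀ ∈ singBdry n Ω) (ε : ℝ) (hε : 0 < ε)
    (hminus : pcubeMinus n x₀ ε ⊆ Ω) (hplus : pcubePlus n x₀ ε ∩ Ω = ∅) :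
    (∀ p ∈ frontier Ω ∩ pcube n x₀ ε, p.2 = x₀.2 ∧ p ∈ singBdry n Ω) ∧
    ∃ U : Set (Pt n), IsOpen U ∧ singBdry n Ω = U ∩ frontier Ω := by
  constructor
  · exact key_lemma n Ω hΩ x₀ ε hε hminus hplus
  · refine ⟨⋃ (p ∈ singBdry n Ω) (r : ℝ)
      (_ : 0 < r ∧ pcubeMinus n p r ⊆ Ω ∧ pcubePlus n p r ∩ Ω = ∅), pcube n p r,
      ?_, ?_⟩
    · exact isOpen_biUnion fun p _ =>
        isOpen_iUnion fun r => isOpen_iUnion fun _ => isOpen_pcube n p r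
    · apply Set.Subset.antisymm
      · intro p hp
        obtain ⟨⟨hpf, ε₁, hε₁, hm⟩, ε₂, hε₂, hpl⟩ := hp
        have hr : 0 < min ε₁ ε₂ := lt_min hε₁ hε₂
        refine ⟨Set.mem_biUnion ⟨⟨hpf, ε₁, hε₁, hm⟩, ε₂, hε₂, hpl⟩ ?_, hpf⟩
        refine Set.mem_iUnion.2 ⟨min ε₁ ε₂, Set.mem_iUnion.2 ⟨⟨hr, ?_, ?_⟩, ?_⟩⟩
        · exact (pcubeMinus_mono n p hr.le (min_le_left _ _)).trans hm
        · exact Set.eq_empty_of_subset_empty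
            (hpl ▸ Set.inter_subset_inter_left Ω
              (pcubePlus_mono n p hr.le (min_le_right _ _)))
        · exact ⟨fun i => by simpa using hr, by nlinarith, by nlinarith⟩
      · rintro q ⟨hqU, hqf⟩
        obtain ⟨p, hps, hq⟩ := Set.mem_iUnion₂.1 hqU
        obtain ⟨r, hq⟩ := Set.mem_iUnion.1 hq
        obtain ⟨⟨hr, hm, hpl⟩, hq⟩ := Set.mem_iUnion.1 hq
        exact (key_lemma n Ω hΩ p r hr hm hpl q ⟨hqf, hq⟩).2
end
end

section
/- Let n ≥ 1 and let Σ ⊂ ℝⁿ⁺¹ be a closed set whose parabolic diameter R₀ satisfies 0 < R₀ < ∞. Let σ be a Borel measure on ℝⁿ⁺¹ supported in Σ satisfying the ADR condition M₀⁻¹ρⁿ⁺¹ ≤ σ(Q_ρ(z,τ) ∩ Σ) ≤ M₀ρⁿ⁺¹ for every (z,τ) ∈ Σ and every 0 < ρ < R₀, where M₀ ≥ 1. Then the time-span of Σ satisfies sup{t : (x,t) ∈ Σ} − inf{t : (x,t) ∈ Σ} ≥ c·R₀², where c > 0 depends only on n and M₀. -/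
open MeasureTheory Set Filter Topology

noncomputable section

/-!
If the times of `Σ` spread by less than `r²`, every spatial grid cell of side `r` meets
`Σ ∩ Q_ρ(z)` inside a single cube `Q_r(s)` with `s ∈ Σ`, so the upper ADR bound gives
`σ(Q_ρ(z) ∩ Σ) ≲ (ρ/r)ⁿ · M₀ rⁿ⁺¹ = M₀ ρⁿ r`. Against the lower bound `M₀⁻¹ ρⁿ⁺¹` this forces
`ρ ≲ M₀² r`; with `ρ = R₀/2` and `r` a small multiple of `R₀/M₀²` the time-span is at least `r²`.
-/

open scoped ENNReal

lemma sqrt_abs_time_sub_le_pdist {n : ℕ} (p q : Pt n) : √|p.2 - q.2| ≤ pdist n p q := by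
  have := norm_nonneg (p.1 - q.1)
  unfold pdist pnorm
  linarith

lemma abs_time_sub_le_sq_of_pdiam_le {n : ℕ} {S : Set (Pt n)} {R : ℝ} (hR : 0 ≤ R)
    (hS : pdiam n S ≤ ENNReal.ofReal R) {p q : Pt n} (hp : p ∈ S) (hq : q ∈ S) :
    |p.2 - q.2| ≤ R ^ 2 := by
  have hpq : ENNReal.ofReal (pdist n p q) ≤ ENNReal.ofReal R :=
    (le_iSup₂_of_le p hp (le_iSup₂ (f := fun q _ => ENNReal.ofReal (pdist n p q)) q hq)).trans hS
  exact (Real.sqrt_le_left hR).1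
    ((sqrt_abs_time_sub_le_pdist p q).trans ((ENNReal.ofReal_le_ofReal_iff hR).1 hpq))

lemma isBounded_times_of_pdiam_le {n : ℕ} {S : Set (Pt n)} {R : ℝ} (hR : 0 ≤ R)
    (hS : pdiam n S ≤ ENNReal.ofReal R) :
    Bornology.IsBounded {t : ℝ | ∃ x, ((x, t) : Pt n) ∈ S} := by
  refine Metric.isBounded_iff.2 ⟨R ^ 2, ?_⟩
  rintro s ⟨x, hx⟩ t ⟨y, hy⟩
  exact abs_time_sub_le_sq_of_pdiam_le hR hS hx hy

lemma sub_le_csSup_sub_csInf {s : Set ℝ} (hs : Bornology.IsBounded s) {x y : ℝ}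
    (hx : x ∈ s) (hy : y ∈ s) : x - y ≤ sSup s - sInf s :=
  sub_le_sub (le_csSup hs.bddAbove hx) (csInf_le hs.bddBelow hy)

lemma measure_le_card_mul_of_mapsTo {α ι : Type*} [MeasurableSpace α] (μ : Measure α)
    {A : Set α} {f : α → ι} {s : Finset ι} (hf : MapsTo f A s) {m : ℝ≥0∞}
    (hm : ∀ k ∈ s, μ (A ∩ f ⁻¹' {k}) ≤ m) : μ A ≤ s.card * m :=
  calc μ A ≤ μ (⋃ k ∈ s, A ∩ f ⁻¹' {k}) :=
        measure_mono fun p hp => mem_iUnion₂.2 ⟨f p, hf hp, hp, rfl⟩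
    _ ≤ ∑ k ∈ s, μ (A ∩ f ⁻¹' {k}) := measure_biUnion_finset_le _ _
    _ ≤ ∑ _k ∈ s, m := Finset.sum_le_sum hm
    _ = s.card * m := by rw [Finset.sum_const, nsmul_eq_mul]

def gridCell {n : ℕ} (z : Pt n) (r : ℝ) (p : Pt n) : Fin n → ℤ :=
  fun i => ⌊(p.1 i - z.1 i) / r⌋

lemma mapsTo_gridCell_pcube {n : ℕ} (z : Pt n) {r : ℝ} (hr : 0 < r) (ρ : ℝ) :
    MapsTo (gridCell z r) (pcube n z ρ)
      ↑(Fintype.piFinset fun _ : Fin n => Finset.Ico (-(⌈ρ / r⌉₊ : ℤ)) ⌈ρ / r⌉₊) := by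
  intro p hp
  simp only [Finset.mem_coe, Fintype.mem_piFinset, Finset.mem_Ico, gridCell]
  intro i
  obtain ⟨hlo, hhi⟩ := abs_lt.1 (hp.1 i)
  have hceil : ρ ≤ ⌈ρ / r⌉₊ * r := (div_le_iff₀ hr).1 (Nat.le_ceil _)
  constructor
  · rw [Int.le_floor, le_div_iff₀ hr]
    push_cast
    linarith
  · rw [Int.floor_lt, div_lt_iff₀ hr]
    push_cast
    linarith

lemma abs_space_sub_lt_of_gridCell_eq {n : ℕ} (z : Pt n) {r : ℝ} (hr : 0 < r) {p q : Pt n}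
    (hpq : gridCell z r p = gridCell z r q) (i : Fin n) : |p.1 i - q.1 i| < r := by
  have h := Int.abs_sub_lt_one_of_floor_eq_floor (congrFun hpq i)
  rwa [← sub_div, sub_sub_sub_cancel_right, abs_div, abs_of_pos hr, div_lt_one hr] at h

lemma measure_pcube_inter_le_of_time_osc_lt {n : ℕ} (σ : Measure (Pt n)) {S : Set (Pt n)}
    {r : ℝ} (hr : 0 < r) (hosc : ∀ p ∈ S, ∀ q ∈ S, |p.2 - q.2| < r ^ 2) {m : ℝ≥0∞}
    (hm : ∀ s ∈ S, σ (pcube n s r ∩ S) ≤ m) (z : Pt n) (ρ : ℝ) :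
    σ (pcube n z ρ ∩ S) ≤ (2 * ⌈ρ / r⌉₊) ^ n * m := by
  have hcard : (Fintype.piFinset fun _ : Fin n =>
      Finset.Ico (-(⌈ρ / r⌉₊ : ℤ)) ⌈ρ / r⌉₊).card = (2 * ⌈ρ / r⌉₊) ^ n := by
    rw [Fintype.card_piFinset, Finset.prod_const, Finset.card_univ, Fintype.card_fin, Int.card_Ico]
    congr 1
    omega
  refine (measure_le_card_mul_of_mapsTo σ
    ((mapsTo_gridCell_pcube z hr ρ).mono_left inter_subset_left) fun k _ => ?_).trans_eq
    (by rw [hcard]; push_cast; rfl)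
  rcases (pcube n z ρ ∩ S ∩ gridCell z r ⁻¹' {k}).eq_empty_or_nonempty with h | ⟨s, ⟨-, hsS⟩, hsk⟩
  · simp [h]
  refine (measure_mono fun p hp => ?_).trans (hm s hsS)
  obtain ⟨⟨-, hpS⟩, hpk⟩ := hp
  have hcell : gridCell z r p = gridCell z r s := hpk.trans hsk.symm
  obtain ⟨hlo, hhi⟩ := abs_lt.1 (hosc p hpS s hsS)
  exact ⟨⟨abs_space_sub_lt_of_gridCell_eq z hr hcell, by linarith, by linarith⟩, hpS⟩

lemma two_mul_ceil_div_mul_le {ρ r : ℝ} (hr : 0 < r) (hrρ : r ≤ ρ) :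
    2 * (⌈ρ / r⌉₊ : ℝ) * r ≤ 4 * ρ := by
  have hceil := Nat.ceil_lt_add_one (div_nonneg (hr.le.trans hrρ) hr.le)
  have hρr : ρ / r * r = ρ := div_mul_cancel₀ ρ hr.ne'
  nlinarith

lemma le_mul_of_time_osc_lt {n : ℕ} (σ : Measure (Pt n)) {S : Set (Pt n)} {M ρ r : ℝ}
    (hM : 0 < M) (hr : 0 < r) (hrρ : r ≤ ρ)
    (hosc : ∀ p ∈ S, ∀ q ∈ S, |p.2 - q.2| < r ^ 2)
    (hupper : ∀ s ∈ S, σ (pcube n s r ∩ S) ≤ ENNReal.ofReal (M * r ^ (n + 1)))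
    {z : Pt n} (hlower : ENNReal.ofReal (M⁻¹ * ρ ^ (n + 1)) ≤ σ (pcube n z ρ ∩ S)) :
    ρ ≤ 4 ^ n * M ^ 2 * r := by
  have hρ : 0 < ρ := hr.trans_le hrρ
  set K : ℝ := 2 * ⌈ρ / r⌉₊
  have hbound : M⁻¹ * ρ ^ (n + 1) ≤ K ^ n * (M * r ^ (n + 1)) := by
    refine (ENNReal.ofReal_le_ofReal_iff (by positivity)).1 (hlower.trans ?_)
    refine (measure_pcube_inter_le_of_time_osc_lt σ hr hosc hupper z ρ).trans_eq ?_
    rw [ENNReal.ofReal_mul (p := K ^ n) (by positivity), ENNReal.ofReal_pow (by positivity),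
      ENNReal.ofReal_mul zero_le_two]
    simp
  have hKr : (K * r) ^ n ≤ (4 * ρ) ^ n :=
    pow_le_pow_left₀ (by positivity) (two_mul_ceil_div_mul_le hr hrρ) n
  have hscaled : ρ ^ n * (M⁻¹ * ρ) ≤ ρ ^ n * (4 ^ n * M * r) :=
    calc ρ ^ n * (M⁻¹ * ρ) = M⁻¹ * ρ ^ (n + 1) := by ring
      _ ≤ K ^ n * (M * r ^ (n + 1)) := hbound
      _ = (K * r) ^ n * (M * r) := by ring
      _ ≤ (4 * ρ) ^ n * (M * r) := by gcongr
      _ = ρ ^ n * (4 ^ n * M * r) := by ring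
  have h := le_of_mul_le_mul_left hscaled (by positivity)
  rw [inv_mul_le_iff₀ hM] at h
  linarith

theorem statement_7_general (n : ℕ) (M₀ : ℝ) (hM₀ : 1 ≤ M₀) :
    ∃ c : ℝ, 0 < c ∧
      ∀ (S : Set (Pt n)) (σ : Measure (Pt n)) (R₀ : ℝ),
        IsClosed S → σ Sᶜ = 0 → 0 < R₀ → pdiam n S = ENNReal.ofReal R₀ →
        (∀ z ∈ S, ∀ ρ : ℝ, 0 < ρ → ρ < R₀ →
          ENNReal.ofReal (M₀⁻¹ * ρ ^ (n + 1)) ≤ σ (pcube n z ρ ∩ S) ∧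
          σ (pcube n z ρ ∩ S) ≤ ENNReal.ofReal (M₀ * ρ ^ (n + 1))) →
        c * R₀ ^ 2 ≤
          sSup {t : ℝ | ∃ x, ((x, t) : Pt n) ∈ S} -
            sInf {t : ℝ | ∃ x, ((x, t) : Pt n) ∈ S} := by
  refine ⟨1 / (4 ^ (n + 1) * M₀ ^ 2) ^ 2, by positivity, ?_⟩
  intro S σ R₀ _ _ hR₀ hdiam hADR
  obtain ⟨z, hz⟩ : S.Nonempty := by
    refine nonempty_iff_ne_empty.2 fun hS => ?_
    simp [hS, pdiam, hR₀.not_ge] at hdiam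
  -- `c = (r / R₀)²` for the scale `r` at which `le_mul_of_time_osc_lt` would give `R₀/2 ≤ R₀/4`.
  set r := R₀ / (4 ^ (n + 1) * M₀ ^ 2)
  have hD : 4 ≤ 4 ^ (n + 1) * M₀ ^ 2 := by
    nlinarith [one_le_pow₀ (show (1 : ℝ) ≤ 4 by norm_num) (n := n), pow_succ (4 : ℝ) n]
  have hr : 0 < r := by positivity
  have hrρ : r ≤ R₀ / 2 := div_le_div_of_nonneg_left hR₀.le (by norm_num) (by linarith)
  have hc : 1 / (4 ^ (n + 1) * M₀ ^ 2) ^ 2 * R₀ ^ 2 = r ^ 2 := by ring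
  have hr_mul : 4 ^ n * M₀ ^ 2 * r = R₀ / 4 := by
    simp only [r]
    field_simp
    ring
  by_contra! hspan
  have hbdd := isBounded_times_of_pdiam_le hR₀.le hdiam.le
  have hosc : ∀ p ∈ S, ∀ q ∈ S, |p.2 - q.2| < r ^ 2 := fun p hp q hq =>
    abs_sub_lt_iff.2
      ⟨(sub_le_csSup_sub_csInf hbdd ⟨_, hp⟩ ⟨_, hq⟩).trans_lt (hspan.trans_eq hc),
       (sub_le_csSup_sub_csInf hbdd ⟨_, hq⟩ ⟨_, hp⟩).trans_lt (hspan.trans_eq hc)⟩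
  have hρ_le : R₀ / 2 ≤ 4 ^ n * M₀ ^ 2 * r := le_mul_of_time_osc_lt σ (by linarith) hr hrρ hosc
    (fun s hs => (hADR s hs r hr (by linarith)).2) (hADR z hz _ (by linarith) (by linarith)).1
  linarith

/-- for a closed parabolic ADR set of finite diameter `R₀`, the time-span is
at least `c·R₀²`. -/
theorem statement_7 (n : ℕ) (hn : 1 ≤ n) (M₀ : ℝ) (hM₀ : 1 ≤ M₀) :
    ∃ c : ℝ, 0 < c ∧
      ∀ (S : Set (Pt n)) (σ : Measure (Pt n)) (R₀ : ℝ),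
        IsClosed S → σ Sᶜ = 0 → 0 < R₀ → pdiam n S = ENNReal.ofReal R₀ →
        (∀ z ∈ S, ∀ ρ : ℝ, 0 < ρ → ρ < R₀ →
          ENNReal.ofReal (M₀⁻¹ * ρ ^ (n + 1)) ≤ σ (pcube n z ρ ∩ S) ∧
          σ (pcube n z ρ ∩ S) ≤ ENNReal.ofReal (M₀ * ρ ^ (n + 1))) →
        c * R₀ ^ 2 ≤
          sSup {t : ℝ | ∃ x, ((x, t) : Pt n) ∈ S} -
            sInf {t : ℝ | ∃ x, ((x, t) : Pt n) ∈ S} :=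
  statement_7_general n M₀ hM₀
end
end
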